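/- Let I ⊆ ℝ be an open interval and y : I → ℝ be twice differentiable with y''(s) = y(s)·y'(s) for all s ∈ I. Then exactly one of the following holds: (a) y is constant on I; (b) there exists c ∈ ℝ with y(s) = −2/(s + c) for all s ∈ I; (c) there exist μ > 0 and c ∈ ℝ with y(s) = −2μ·cot(μ(s + c)) for all s ∈ I; (d) there exist μ > 0 and c ∈ ℝ with y(s) = −2μ·tanh(μ(s + c)) for all s ∈ I; (e) there exist μ > 0 and c ∈ ℝ with y(s) = −2μ·coth(μ(s + c)) for all s ∈ I. -/

import Mathlib

/-!
Differentiating `y' - y² / 2` shows that it is a constant `a`, and `z = y'` solves the linear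
equation `z' = y z`, so `y' = K exp (∫ y)` has constant sign. The Riccati equation
`y' = y² / 2 + a` then integrates explicitly according to the signs of `y'` and `a`: `-2 / y - s`
is constant when `a = 0`, `arctan (y / 2μ) - μ s` is constant when `a = 2μ²`, and
`(y - 2μ) / (y + 2μ)` is a multiple of `exp (2μ s)` when `a = -2μ²`. Conversely, each of the five
families has its own signs of `y'` and `a`, read off at a point where the formula is regular, so
at most one family can describe `y`.
-/

open Real Set Filter

theorem exists_eq_const_of_hasDerivAt_zero {I : Set ℝ} {F : ℝ → ℝ} (hI : IsOpen I)
    (hI' : I.OrdConnected) (hF : ∀ s ∈ I, HasDerivAt F 0 s) : ∃ C, ∀ s ∈ I, F s = C :=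
  hI.exists_is_const_of_deriv_eq_zero hI'.isPreconnected
    (fun s hs => (hF s hs).differentiableAt.differentiableWithinAt) fun s hs => (hF s hs).deriv

theorem exists_hasDerivAt_of_continuousOn {I : Set ℝ} {g : ℝ → ℝ} (hI : IsOpen I)
    (hI' : I.OrdConnected) (hg : ContinuousOn g I) :
    ∃ G : ℝ → ℝ, ∀ s ∈ I, HasDerivAt G (g s) s := by
  rcases I.eq_empty_or_nonempty with rfl | ⟨s₀, hs₀⟩
  · exact ⟨0, by simp⟩
  exact ⟨fun s => ∫ t in s₀..s, g t, fun s hs =>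
    intervalIntegral.integral_hasDerivAt_right
      (hg.mono (hI'.uIcc_subset hs₀ hs)).intervalIntegrable
      (hg.stronglyMeasurableAtFilter hI s hs) (hg.continuousAt (hI.mem_nhds hs))⟩

theorem exists_eq_mul_exp_of_hasDerivAt_mul {I : Set ℝ} {g G z : ℝ → ℝ} (hI : IsOpen I)
    (hI' : I.OrdConnected) (hG : ∀ s ∈ I, HasDerivAt G (g s) s)
    (hz : ∀ s ∈ I, HasDerivAt z (g s * z s) s) : ∃ K, ∀ s ∈ I, z s = K * exp (G s) := by
  obtain ⟨K, hK⟩ := exists_eq_const_of_hasDerivAt_zero (F := fun s => z s * exp (-G s))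
    hI hI' fun s hs => ((hz s hs).mul (hG s hs).neg.exp).congr_deriv (by ring)
  refine ⟨K, fun s hs => ?_⟩
  rw [← hK s hs, mul_assoc, ← exp_add, neg_add_cancel, exp_zero, mul_one]

theorem exists_sign_eq_of_hasDerivAt_mul {I : Set ℝ} {g z : ℝ → ℝ} (hI : IsOpen I)
    (hI' : I.OrdConnected) (hg : ContinuousOn g I) (hz : ∀ s ∈ I, HasDerivAt z (g s * z s) s) :
    ∃ σ : SignType, ∀ s ∈ I, SignType.sign (z s) = σ := by
  obtain ⟨G, hG⟩ := exists_hasDerivAt_of_continuousOn hI hI' hg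
  obtain ⟨K, hK⟩ := exists_eq_mul_exp_of_hasDerivAt_mul hI hI' hG hz
  exact ⟨SignType.sign K, fun s hs => by rw [hK s hs, sign_mul, sign_pos (exp_pos _), mul_one]⟩

theorem exists_eq_sq_div_two_add_of_hasDerivAt {I : Set ℝ} {y y' : ℝ → ℝ} (hI : IsOpen I)
    (hI' : I.OrdConnected) (hy : ∀ s ∈ I, HasDerivAt y (y' s) s)
    (hy' : ∀ s ∈ I, HasDerivAt y' (y s * y' s) s) : ∃ a, ∀ s ∈ I, y' s = y s ^ 2 / 2 + a := by
  obtain ⟨a, ha⟩ := exists_eq_const_of_hasDerivAt_zero (F := fun s => y' s - y s ^ 2 / 2)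
    hI hI' fun s hs =>
      ((hy' s hs).sub (((hy s hs).pow 2).div_const 2)).congr_deriv (by push_cast; ring)
  exact ⟨a, fun s hs => by linarith [ha s hs]⟩

theorem exists_eq_neg_two_div_add_of_hasDerivAt {I : Set ℝ} {y : ℝ → ℝ} (hI : IsOpen I)
    (hI' : I.OrdConnected) (hy : ∀ s ∈ I, HasDerivAt y (y s ^ 2 / 2) s)
    (hy0 : ∀ s ∈ I, y s ≠ 0) : ∃ c, ∀ s ∈ I, y s = -2 / (s + c) := by
  obtain ⟨c, hc⟩ := exists_eq_const_of_hasDerivAt_zero (F := fun s => -2 / y s - s) hI hI'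
    fun s hs => (((hasDerivAt_const s (-2 : ℝ)).div (hy s hs) (hy0 s hs)).sub
      (hasDerivAt_id s)).congr_deriv (by field_simp [hy0 s hs]; ring)
  refine ⟨c, fun s hs => ?_⟩
  rw [← hc s hs, add_sub_cancel, div_div_cancel₀ (by norm_num)]

theorem cot_add_pi_div_two (x : ℝ) : cot (x + π / 2) = -tan x := by
  rw [cot_eq_cos_div_sin, cos_add_pi_div_two, sin_add_pi_div_two, tan_eq_sin_div_cos, neg_div]

theorem exists_eq_neg_two_mul_cot_of_hasDerivAt {I : Set ℝ} {y : ℝ → ℝ} {μ : ℝ} (hμ : μ ≠ 0)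
    (hI : IsOpen I) (hI' : I.OrdConnected)
    (hy : ∀ s ∈ I, HasDerivAt y (y s ^ 2 / 2 + 2 * μ ^ 2) s) :
    ∃ c, ∀ s ∈ I, y s = -2 * μ * cot (μ * (s + c)) := by
  obtain ⟨C, hC⟩ := exists_eq_const_of_hasDerivAt_zero
    (F := fun s => arctan (y s / (2 * μ)) - μ * s) hI hI' fun s hs =>
      (((hy s hs).div_const (2 * μ)).arctan.sub ((hasDerivAt_id s).const_mul μ)).congr_deriv
        (by field_simp; ring)
  refine ⟨(C + π / 2) / μ, fun s hs => ?_⟩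
  have harctan : arctan (y s / (2 * μ)) = μ * s + C := by linarith [hC s hs]
  rw [show μ * (s + (C + π / 2) / μ) = μ * s + C + π / 2 by field_simp; ring,
    cot_add_pi_div_two, ← harctan, tan_arctan]
  field_simp

theorem exists_abs_div_eq_exp_of_hasDerivAt {I : Set ℝ} {y : ℝ → ℝ} {μ : ℝ} (hμ : μ ≠ 0)
    (hI : IsOpen I) (hI' : I.OrdConnected)
    (hy : ∀ s ∈ I, HasDerivAt y (y s ^ 2 / 2 - 2 * μ ^ 2) s)
    (hy0 : ∀ s ∈ I, y s ^ 2 / 2 - 2 * μ ^ 2 ≠ 0) :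
    ∃ c, ∀ s ∈ I, |(y s - 2 * μ) / (y s + 2 * μ)| = exp (2 * (μ * (s + c))) := by
  -- `(y - 2μ) / (y + 2μ)` solves `z' = 2μ z`, since `y' = (y - 2μ) (y + 2μ) / 2`.
  have hfactor : ∀ s ∈ I, y s - 2 * μ ≠ 0 ∧ y s + 2 * μ ≠ 0 := fun s hs =>
    mul_ne_zero_iff.1 fun h => hy0 s hs (by linear_combination h / 2)
  obtain ⟨K, hK⟩ := exists_eq_mul_exp_of_hasDerivAt_mul (g := fun _ => 2 * μ)
    (G := fun s => 2 * μ * s) (z := fun s => (y s - 2 * μ) / (y s + 2 * μ)) hI hI'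
    (fun s _ => by simpa using (hasDerivAt_id s).const_mul (2 * μ)) fun s hs =>
      (((hy s hs).sub_const _).div ((hy s hs).add_const _) (hfactor s hs).2).congr_deriv (by
        field_simp [(hfactor s hs).2]; ring)
  refine ⟨log |K| / (2 * μ), fun s hs => ?_⟩
  have hK0 : K ≠ 0 := by
    rintro rfl
    simpa [(hfactor s hs).1, (hfactor s hs).2] using hK s hs
  rw [hK s hs, abs_mul, abs_of_pos (exp_pos _),
    show 2 * (μ * (s + log |K| / (2 * μ))) = log |K| + 2 * μ * s by field_simp; ring,
    exp_add, exp_log (abs_pos.2 hK0)]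

theorem eq_neg_two_mul_tanh_of_div_eq_neg_exp {y μ x : ℝ} (hy : y + 2 * μ ≠ 0)
    (h : (y - 2 * μ) / (y + 2 * μ) = -exp (2 * x)) : y = -2 * μ * tanh x := by
  rw [div_eq_iff hy, show 2 * x = x + x by ring, exp_add] at h
  rw [tanh_eq, exp_neg]
  field_simp
  linear_combination h

theorem eq_neg_two_mul_coth_of_div_eq_exp {y μ x : ℝ} (hμ : μ ≠ 0) (hy : y + 2 * μ ≠ 0)
    (h : (y - 2 * μ) / (y + 2 * μ) = exp (2 * x)) : y = -2 * μ * (cosh x / sinh x) := by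
  have hx : sinh x ≠ 0 := by
    refine sinh_ne_zero.2 fun hx => hμ ?_
    rw [hx, mul_zero, exp_zero, div_eq_one_iff_eq hy] at h
    linarith
  rw [div_eq_iff hy, show 2 * x = x + x by ring, exp_add] at h
  rw [← mul_div_assoc, eq_div_iff hx, cosh_eq, sinh_eq, exp_neg]
  field_simp
  linear_combination -h

theorem exists_eq_neg_two_mul_tanh_of_hasDerivAt {I : Set ℝ} {y : ℝ → ℝ} {μ : ℝ} (hμ : μ ≠ 0)
    (hI : IsOpen I) (hI' : I.OrdConnected)
    (hy : ∀ s ∈ I, HasDerivAt y (y s ^ 2 / 2 - 2 * μ ^ 2) s)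
    (hneg : ∀ s ∈ I, y s ^ 2 / 2 - 2 * μ ^ 2 < 0) :
    ∃ c, ∀ s ∈ I, y s = -2 * μ * tanh (μ * (s + c)) := by
  obtain ⟨c, hc⟩ := exists_abs_div_eq_exp_of_hasDerivAt hμ hI hI' hy
    fun s hs => (hneg s hs).ne
  refine ⟨c, fun s hs => ?_⟩
  have hprod : (y s - 2 * μ) * (y s + 2 * μ) < 0 := by linear_combination 2 * hneg s hs
  refine eq_neg_two_mul_tanh_of_div_eq_neg_exp (right_ne_zero_of_mul hprod.ne) ?_
  rw [← hc s hs, abs_of_neg (div_neg_iff.2 (mul_neg_iff.1 hprod)), neg_neg]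

theorem exists_eq_neg_two_mul_coth_of_hasDerivAt {I : Set ℝ} {y : ℝ → ℝ} {μ : ℝ} (hμ : μ ≠ 0)
    (hI : IsOpen I) (hI' : I.OrdConnected)
    (hy : ∀ s ∈ I, HasDerivAt y (y s ^ 2 / 2 - 2 * μ ^ 2) s)
    (hpos : ∀ s ∈ I, 0 < y s ^ 2 / 2 - 2 * μ ^ 2) :
    ∃ c, ∀ s ∈ I, y s = -2 * μ * (cosh (μ * (s + c)) / sinh (μ * (s + c))) := by
  obtain ⟨c, hc⟩ := exists_abs_div_eq_exp_of_hasDerivAt hμ hI hI' hy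
    fun s hs => (hpos s hs).ne'
  refine ⟨c, fun s hs => ?_⟩
  have hprod : 0 < (y s - 2 * μ) * (y s + 2 * μ) := by linear_combination 2 * hpos s hs
  refine eq_neg_two_mul_coth_of_div_eq_exp hμ (right_ne_zero_of_mul hprod.ne') ?_
  rw [← hc s hs, abs_of_pos (div_pos_iff.2 (mul_pos_iff.1 hprod))]

theorem hasDerivAt_neg_two_div_add (c : ℝ) {s : ℝ} (hs : s + c ≠ 0) :
    HasDerivAt (fun s => -2 / (s + c)) ((-2 / (s + c)) ^ 2 / 2) s :=
  ((hasDerivAt_const s (-2 : ℝ)).div ((hasDerivAt_id' s).add_const c) hs).congr_deriv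
    (by field_simp; ring)

theorem hasDerivAt_mul_add_const (μ c s : ℝ) : HasDerivAt (fun s => μ * (s + c)) μ s := by
  simpa using ((hasDerivAt_id s).add_const c).const_mul μ

theorem hasDerivAt_neg_two_mul_cot (μ c : ℝ) {s : ℝ} (hs : sin (μ * (s + c)) ≠ 0) :
    HasDerivAt (fun s => -2 * μ * cot (μ * (s + c)))
      ((-2 * μ * cot (μ * (s + c))) ^ 2 / 2 + 2 * μ ^ 2) s := by
  have hu := hasDerivAt_mul_add_const μ c s
  simp only [cot_eq_cos_div_sin]
  exact ((hu.cos.div hu.sin hs).const_mul (-2 * μ)).congr_deriv (by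
    field_simp; ring)

theorem hasDerivAt_neg_two_mul_tanh (μ c s : ℝ) :
    HasDerivAt (fun s => -2 * μ * tanh (μ * (s + c)))
      ((-2 * μ * tanh (μ * (s + c))) ^ 2 / 2 - 2 * μ ^ 2) s := by
  have hu := hasDerivAt_mul_add_const μ c s
  simp only [tanh_eq_sinh_div_cosh]
  exact ((hu.sinh.div hu.cosh (cosh_pos _).ne').const_mul (-2 * μ)).congr_deriv (by
    field_simp; ring)

theorem hasDerivAt_neg_two_mul_coth (μ c : ℝ) {s : ℝ} (hs : sinh (μ * (s + c)) ≠ 0) :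
    HasDerivAt (fun s => -2 * μ * (cosh (μ * (s + c)) / sinh (μ * (s + c))))
      ((-2 * μ * (cosh (μ * (s + c)) / sinh (μ * (s + c)))) ^ 2 / 2 - 2 * μ ^ 2) s := by
  have hu := hasDerivAt_mul_add_const μ c s
  exact ((hu.cosh.div hu.sinh hs).const_mul (-2 * μ)).congr_deriv (by
    field_simp; ring)

theorem countable_setOf_sin_mul_add_eq_zero {μ : ℝ} (hμ : μ ≠ 0) (c : ℝ) :
    {s : ℝ | sin (μ * (s + c)) = 0}.Countable :=
  (countable_range fun n : ℤ => n * π / μ - c).mono fun s hs => by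
    obtain ⟨n, hn⟩ := sin_eq_zero_iff.1 hs
    exact ⟨n, by field_simp; linarith⟩

/-- The position in the theorem's list of the family of solutions of `y' = y² / 2 + a`, given
the sign of `y'` and the sign of `a`. -/
def familyIndex : SignType → SignType → Fin 5
  | .zero, _ => 0
  | .pos, .zero => 1
  | .pos, .pos => 2
  | .neg, _ => 3
  | .pos, .neg => 4

def solutionFamily (I : Set ℝ) (y : ℝ → ℝ) : Fin 5 → Prop :=
  ![ (∃ k : ℝ, ∀ s ∈ I, y s = k),
     (∃ c : ℝ, ∀ s ∈ I, y s = -2 / (s + c)),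
     (∃ μ : ℝ, 0 < μ ∧ ∃ c : ℝ, ∀ s ∈ I, y s = -2 * μ * cot (μ * (s + c))),
     (∃ μ : ℝ, 0 < μ ∧ ∃ c : ℝ, ∀ s ∈ I, y s = -2 * μ * tanh (μ * (s + c))),
     (∃ μ : ℝ, 0 < μ ∧ ∃ c : ℝ, ∀ s ∈ I,
        y s = -2 * μ * (cosh (μ * (s + c)) / sinh (μ * (s + c)))) ]

/-- `S` is where the formula `f` is singular (there it takes Lean's junk value); an open
nonempty `I` has points off the countable set `S`. -/
theorem familyIndex_eq_of_eqOn {I S : Set ℝ} {y f : ℝ → ℝ} {σ τ : SignType} {a b : ℝ}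
    (hI : IsOpen I) (hne : I.Nonempty) (hσ : ∀ s ∈ I, SignType.sign (deriv y s) = σ)
    (ha : ∀ s ∈ I, deriv y s = y s ^ 2 / 2 + a) (hS : S.Countable)
    (hf : ∀ s ∉ S, HasDerivAt f (f s ^ 2 / 2 + b) s)
    (hτ : ∀ s ∉ S, SignType.sign (f s ^ 2 / 2 + b) = τ) (hyf : ∀ s ∈ I, y s = f s) :
    familyIndex σ (SignType.sign a) = familyIndex τ (SignType.sign b) := by
  obtain ⟨s, hs, hsS⟩ := (hS.dense_compl ℝ).inter_open_nonempty I hI hne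
  have hderiv : deriv y s = f s ^ 2 / 2 + b :=
    ((hf s hsS).congr_of_eventuallyEq (eventually_of_mem (hI.mem_nhds hs) hyf)).deriv
  have hab : a = b := by linarith [ha s hs, hyf s hs ▸ hderiv]
  rw [← hσ s hs, hderiv, hτ s hsS, hab]

theorem familyIndex_eq_zero_of_eqOn_const {I : Set ℝ} {y : ℝ → ℝ} {σ : SignType} {a k : ℝ}
    (hI : IsOpen I) (hne : I.Nonempty) (hσ : ∀ s ∈ I, SignType.sign (deriv y s) = σ)
    (ha : ∀ s ∈ I, deriv y s = y s ^ 2 / 2 + a) (hy : ∀ s ∈ I, y s = k) :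
    familyIndex σ (SignType.sign a) = 0 :=
  familyIndex_eq_of_eqOn (τ := 0) (f := fun _ => k) (b := -(k ^ 2 / 2)) hI hne hσ ha
    countable_empty
    (fun s _ => (hasDerivAt_const s k).congr_deriv (by ring)) (fun s _ => by simp) hy

theorem familyIndex_eq_one_of_eqOn_neg_two_div {I : Set ℝ} {y : ℝ → ℝ} {σ : SignType} {a c : ℝ}
    (hI : IsOpen I) (hne : I.Nonempty) (hσ : ∀ s ∈ I, SignType.sign (deriv y s) = σ)
    (ha : ∀ s ∈ I, deriv y s = y s ^ 2 / 2 + a) (hy : ∀ s ∈ I, y s = -2 / (s + c)) :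
    familyIndex σ (SignType.sign a) = 1 := by
  have hsc {s : ℝ} (hs : s ∉ ({-c} : Set ℝ)) : s + c ≠ 0 :=
    fun h => hs (eq_neg_of_add_eq_zero_left h)
  rw [familyIndex_eq_of_eqOn (b := 0) hI hne hσ ha (countable_singleton (-c))
    (fun s hs => (hasDerivAt_neg_two_div_add c (hsc hs)).congr_deriv (add_zero _).symm)
    (fun s hs => sign_pos (by
      have := div_ne_zero (by norm_num : (-2 : ℝ) ≠ 0) (hsc hs); positivity)) hy,
    _root_.sign_zero]
  rfl

theorem familyIndex_eq_two_of_eqOn_cot {I : Set ℝ} {y : ℝ → ℝ} {σ : SignType} {a μ c : ℝ}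
    (hI : IsOpen I) (hne : I.Nonempty) (hσ : ∀ s ∈ I, SignType.sign (deriv y s) = σ)
    (ha : ∀ s ∈ I, deriv y s = y s ^ 2 / 2 + a) (hμ : 0 < μ)
    (hy : ∀ s ∈ I, y s = -2 * μ * cot (μ * (s + c))) :
    familyIndex σ (SignType.sign a) = 2 := by
  rw [familyIndex_eq_of_eqOn hI hne hσ ha (countable_setOf_sin_mul_add_eq_zero hμ.ne' c)
    (fun s hs => hasDerivAt_neg_two_mul_cot μ c hs) (fun s _ => sign_pos (by positivity)) hy,
    sign_pos (by positivity)]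
  rfl

theorem familyIndex_eq_three_of_eqOn_tanh {I : Set ℝ} {y : ℝ → ℝ} {σ : SignType} {a μ c : ℝ}
    (hI : IsOpen I) (hne : I.Nonempty) (hσ : ∀ s ∈ I, SignType.sign (deriv y s) = σ)
    (ha : ∀ s ∈ I, deriv y s = y s ^ 2 / 2 + a) (hμ : 0 < μ)
    (hy : ∀ s ∈ I, y s = -2 * μ * tanh (μ * (s + c))) :
    familyIndex σ (SignType.sign a) = 3 :=
  familyIndex_eq_of_eqOn (τ := -1) hI hne hσ ha countable_empty
    (fun s _ => (hasDerivAt_neg_two_mul_tanh μ c s).congr_deriv (sub_eq_add_neg _ _))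
    (fun s _ => sign_neg (by nlinarith [tanh_sq_lt_one (μ * (s + c)), pow_pos hμ 2])) hy

theorem familyIndex_eq_four_of_eqOn_coth {I : Set ℝ} {y : ℝ → ℝ} {σ : SignType} {a μ c : ℝ}
    (hI : IsOpen I) (hne : I.Nonempty) (hσ : ∀ s ∈ I, SignType.sign (deriv y s) = σ)
    (ha : ∀ s ∈ I, deriv y s = y s ^ 2 / 2 + a) (hμ : 0 < μ)
    (hy : ∀ s ∈ I, y s = -2 * μ * (cosh (μ * (s + c)) / sinh (μ * (s + c)))) :
    familyIndex σ (SignType.sign a) = 4 := by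
  have hsinh {s : ℝ} (hs : s ∉ ({-c} : Set ℝ)) : sinh (μ * (s + c)) ≠ 0 :=
    sinh_ne_zero.2 (mul_ne_zero hμ.ne' fun h => hs (eq_neg_of_add_eq_zero_left h))
  rw [familyIndex_eq_of_eqOn hI hne hσ ha (countable_singleton (-c))
    (fun s hs => (hasDerivAt_neg_two_mul_coth μ c (hsinh hs)).congr_deriv (sub_eq_add_neg _ _))
    (fun s hs => sign_pos ?_) hy, sign_neg (neg_lt_zero.2 (by positivity))]
  · rfl
  · have := hsinh hs
    rw [show (-2 * μ * (cosh (μ * (s + c)) / sinh (μ * (s + c)))) ^ 2 / 2 + -(2 * μ ^ 2)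
        = 2 * μ ^ 2 / sinh (μ * (s + c)) ^ 2 by
      field_simp; linear_combination cosh_sq (μ * (s + c))]
    positivity

theorem exists_pos_eq_two_mul_sq {a : ℝ} (ha : 0 < a) : ∃ μ : ℝ, 0 < μ ∧ a = 2 * μ ^ 2 :=
  ⟨√(a / 2), sqrt_pos.2 (half_pos ha), by rw [sq_sqrt (half_pos ha).le]; ring⟩

theorem solutionFamily_familyIndex {I : Set ℝ} {y : ℝ → ℝ} {σ : SignType} {a : ℝ}
    (hI : IsOpen I) (hI' : I.OrdConnected) (hne : I.Nonempty)
    (hy : ∀ s ∈ I, HasDerivAt y (y s ^ 2 / 2 + a) s)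
    (hσ : ∀ s ∈ I, SignType.sign (y s ^ 2 / 2 + a) = σ) :
    solutionFamily I y (familyIndex σ (SignType.sign a)) := by
  have hyμ {μ : ℝ} (hμ : -a = 2 * μ ^ 2) (s : ℝ) (hs : s ∈ I) :
      HasDerivAt y (y s ^ 2 / 2 - 2 * μ ^ 2) s :=
    (hy s hs).congr_deriv (by linarith)
  rcases σ with _ | _ | _
  · exact exists_eq_const_of_hasDerivAt_zero hI hI' fun s hs =>
      (hy s hs).congr_deriv (sign_eq_zero_iff.1 (hσ s hs))
  · have hneg s (hs : s ∈ I) : y s ^ 2 / 2 + a < 0 := sign_eq_neg_one_iff.1 (hσ s hs)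
    obtain ⟨s₀, hs₀⟩ := hne
    obtain ⟨μ, hμ, hμa⟩ := exists_pos_eq_two_mul_sq (a := -a) (by nlinarith [hneg s₀ hs₀])
    exact ⟨μ, hμ, exists_eq_neg_two_mul_tanh_of_hasDerivAt hμ.ne' hI hI' (hyμ hμa)
      fun s hs => by linarith [hneg s hs]⟩
  · have hpos s (hs : s ∈ I) : 0 < y s ^ 2 / 2 + a := sign_eq_one_iff.1 (hσ s hs)
    rcases lt_trichotomy a 0 with ha | rfl | ha
    · obtain ⟨μ, hμ, hμa⟩ := exists_pos_eq_two_mul_sq (neg_pos.2 ha)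
      rw [sign_neg ha]
      exact ⟨μ, hμ, exists_eq_neg_two_mul_coth_of_hasDerivAt hμ.ne' hI hI' (hyμ hμa)
        fun s hs => by linarith [hpos s hs]⟩
    · rw [_root_.sign_zero]
      exact exists_eq_neg_two_div_add_of_hasDerivAt hI hI'
        (fun s hs => (hy s hs).congr_deriv (add_zero _))
        fun s hs h => by simpa [h] using hpos s hs
    · obtain ⟨μ, hμ, rfl⟩ := exists_pos_eq_two_mul_sq ha
      rw [sign_pos ha]
      exact ⟨μ, hμ, exists_eq_neg_two_mul_cot_of_hasDerivAt hμ.ne' hI hI' hy⟩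

theorem ode_classification_y''_eq_y_mul_y'
    (I : Set ℝ) (hI : IsOpen I) (hI' : I.OrdConnected) (hne : I.Nonempty)
    (y : ℝ → ℝ)
    (hy : ∀ s ∈ I, DifferentiableAt ℝ y s)
    (hy' : ∀ s ∈ I, DifferentiableAt ℝ (deriv y) s)
    (hode : ∀ s ∈ I, deriv (deriv y) s = y s * deriv y s) :
    ∃! i : Fin 5,
      ![ (∃ k : ℝ, ∀ s ∈ I, y s = k),
         (∃ c : ℝ, ∀ s ∈ I, y s = -2 / (s + c)),
         (∃ μ : ℝ, 0 < μ ∧ ∃ c : ℝ, ∀ s ∈ I, y s = -2 * μ * Real.cot (μ * (s + c))),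
         (∃ μ : ℝ, 0 < μ ∧ ∃ c : ℝ, ∀ s ∈ I, y s = -2 * μ * Real.tanh (μ * (s + c))),
         (∃ μ : ℝ, 0 < μ ∧ ∃ c : ℝ, ∀ s ∈ I,
            y s = -2 * μ * (Real.cosh (μ * (s + c)) / Real.sinh (μ * (s + c)))) ] i := by
  have hy₁ s (hs : s ∈ I) : HasDerivAt y (deriv y s) s := (hy s hs).hasDerivAt
  have hy₂ s (hs : s ∈ I) : HasDerivAt (deriv y) (y s * deriv y s) s :=
    hode s hs ▸ (hy' s hs).hasDerivAt
  obtain ⟨σ, hσ⟩ := exists_sign_eq_of_hasDerivAt_mul hI hI'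
    (fun s hs => (hy s hs).continuousAt.continuousWithinAt) hy₂
  obtain ⟨a, ha⟩ := exists_eq_sq_div_two_add_of_hasDerivAt hI hI' hy₁ hy₂
  refine ⟨familyIndex σ (SignType.sign a), solutionFamily_familyIndex hI hI' hne
    (fun s hs => ha s hs ▸ hy₁ s hs) (fun s hs => ha s hs ▸ hσ s hs), fun j hj => ?_⟩
  fin_cases j
  · obtain ⟨k, hk⟩ := hj
    exact (familyIndex_eq_zero_of_eqOn_const hI hne hσ ha hk).symm
  · obtain ⟨c, hc⟩ := hj
    exact (familyIndex_eq_one_of_eqOn_neg_two_div hI hne hσ ha hc).symm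
  · obtain ⟨μ, hμ, c, hc⟩ := hj
    exact (familyIndex_eq_two_of_eqOn_cot hI hne hσ ha hμ hc).symm
  · obtain ⟨μ, hμ, c, hc⟩ := hj
    exact (familyIndex_eq_three_of_eqOn_tanh hI hne hσ ha hμ hc).symm
  · obtain ⟨μ, hμ, c, hc⟩ := hj
    exact (familyIndex_eq_four_of_eqOn_coth hI hne hσ ha hμ hc).symm
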